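/- arXiv:2507.10915 — 2 statements merged into one kernel-verified Lean document; each statement's English description precedes it below -/
import Mathlib

section
/- Let ρ ∈ H¹(Ω) be a positive minimizer of the functional E_ε(v) = (1/2)∫_Ω |∇v|² + (1/(2ε²))(a - |v|²)². Then for every u ∈ H¹(Ω, ℂ), one has E_ε(ρu) = E_ε(ρ) + (1/2)∫_Ω ρ²|∇u|² + (ρ⁴/(2ε²))(1 - |u|²)². -/
open MeasureTheory

noncomputable section

abbrev E3 : Type := EuclideanSpace ℝ (Fin 3)

def pd (f : E3 → ℝ) (j : Fin 3) (x : E3) : ℝ := fderiv ℝ f x (EuclideanSpace.single j 1)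

def gradSqR (f : E3 → ℝ) (x : E3) : ℝ := ∑ j : Fin 3, (pd f j x) ^ 2

def gradSqC (f : E3 → ℂ) (x : E3) : ℝ :=
  ∑ j : Fin 3, ‖fderiv ℝ f x (EuclideanSpace.single j 1)‖ ^ 2

def lap (f : E3 → ℝ) (x : E3) : ℝ :=
  ∑ j : Fin 3, fderiv ℝ (fun y => pd f j y) x (EuclideanSpace.single j 1)

/-
Minimality of `ρ` gives the weak Euler–Lagrange equation
`∫ ∇ρ·∇φ = (2/ε²) ∫ ρ φ (a - ρ²)` for every C¹ test function `φ`: the energy along the line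
`ρ + tφ` is a quartic polynomial in `t` with a minimum at `t = 0`, so its linear coefficient
vanishes. Expanding `|∇(ρu)|² = ρ²|∇u|² + 2ρ ∇ρ·⟨u, ∇u⟩ + |u|²|∇ρ|²` and
`(a - ρ²|u|²)² = (a - ρ²)² + 2ρ²(a - ρ²)(1 - |u|²) + ρ⁴(1 - |u|²)²` pointwise, the difference of
the two sides of the identity is half the Euler–Lagrange functional tested against
`φ = ρ(|u|² - 1)`, hence zero.
-/

open MeasureTheory Bornology Finset
open scoped InnerProductSpace

theorem integrableOn_comp_of_bounded {X E : Type*} [MetricSpace X] [ProperSpace X]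
    [MeasurableSpace X] [BorelSpace X] [NormedAddCommGroup E]
    {μ : Measure X} [IsFiniteMeasureOnCompacts μ] {s : Set X} (hs : IsBounded s)
    (hsm : MeasurableSet s) {a : X → ℝ} (ha : Measurable a) {C : ℝ} (haC : ∀ x ∈ s, |a x| ≤ C)
    {G : ℝ → X → E} (hG : Continuous fun p : ℝ × X => G p.1 p.2) :
    IntegrableOn (fun x => G (a x) x) s μ := by
  obtain ⟨M, hM⟩ : ∃ M, ∀ p ∈ Set.Icc (-C) C ×ˢ closure s, ‖G p.1 p.2‖ ≤ M :=
    (isCompact_Icc.prod hs.isCompact_closure).exists_bound_of_continuousOn hG.continuousOn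
  refine Measure.integrableOn_of_bounded (M := M) hs.measure_lt_top.ne
    (hG.comp_aestronglyMeasurable (ha.aestronglyMeasurable.prodMk aestronglyMeasurable_id)) ?_
  filter_upwards [ae_restrict_mem hsm] with x hx
  exact hM (a x, x) ⟨abs_le.mp (haC x hx), subset_closure hx⟩

theorem hasDerivAt_integral_sum_pow_mul {X : Type*} [MeasurableSpace X] {μ : Measure X}
    {c : ℕ → X → ℝ} {n : ℕ} (hc : ∀ k < n, Integrable (c k) μ) (hn : 1 < n) :
    HasDerivAt (fun t : ℝ => ∫ x, ∑ k ∈ range n, t ^ k * c k x ∂μ) (∫ x, c 1 x ∂μ) 0 := by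
  have hsum : ∀ t : ℝ,
      ∫ x, ∑ k ∈ range n, t ^ k * c k x ∂μ = ∑ k ∈ range n, t ^ k * ∫ x, c k x ∂μ := by
    intro t
    rw [integral_finsetSum _ fun k hk => (hc k (mem_range.mp hk)).const_mul _]
    simp only [integral_const_mul]
  simp only [hsum]
  refine (HasDerivAt.fun_sum fun k _ =>
    (hasDerivAt_pow k (0 : ℝ)).mul_const (∫ x, c k x ∂μ)).congr_deriv ?_
  rw [sum_eq_single 1 (fun k _ hk => by simp; left; omega)
    (fun h => absurd (mem_range.mpr hn) h)]
  simp

section Energy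

variable (c : ℝ) (a : E3 → ℝ)

def gradDot (f g : E3 → ℝ) (x : E3) : ℝ := ∑ j : Fin 3, pd f j x * pd g j x

def energyDensity (v : E3 → ℝ) (x : E3) : ℝ := 1 / 2 * gradSqR v x + c * (a x - v x ^ 2) ^ 2

def energyDensityC (u : E3 → ℂ) (x : E3) : ℝ :=
  1 / 2 * gradSqC u x + c * (a x - ‖u x‖ ^ 2) ^ 2

def energy (Ω : Set E3) (v : E3 → ℝ) : ℝ := ∫ x in Ω, energyDensity c a v x

def firstVariationDensity (ρ φ : E3 → ℝ) (x : E3) : ℝ :=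
  gradDot ρ φ x - 4 * c * ρ x * φ x * (a x - ρ x ^ 2)

def energyLineCoeff (ρ φ : E3 → ℝ) : ℕ → E3 → ℝ
  | 0 => energyDensity c a ρ
  | 1 => firstVariationDensity c a ρ φ
  | 2 => fun x => 1 / 2 * gradSqR φ x + c * (6 * ρ x ^ 2 - 2 * a x) * φ x ^ 2
  | 3 => fun x => 4 * c * ρ x * φ x ^ 3
  | 4 => fun x => c * φ x ^ 4
  | _ => 0

end Energy

section Derivatives

variable {f g : E3 → ℝ}

theorem continuous_pd (hf : ContDiff ℝ 1 f) (j : Fin 3) : Continuous (pd f j) :=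
  (hf.continuous_fderiv one_ne_zero).clm_apply continuous_const

theorem continuous_gradSqR (hf : ContDiff ℝ 1 f) : Continuous (gradSqR f) :=
  continuous_finsetSum _ fun j _ => (continuous_pd hf j).pow 2

theorem continuous_gradDot (hf : ContDiff ℝ 1 f) (hg : ContDiff ℝ 1 g) :
    Continuous (gradDot f g) :=
  continuous_finsetSum _ fun j _ => (continuous_pd hf j).mul (continuous_pd hg j)

theorem continuous_gradSqC {u : E3 → ℂ} (hu : ContDiff ℝ 1 u) : Continuous (gradSqC u) :=
  continuous_finsetSum _ fun _ _ =>
    ((hu.continuous_fderiv one_ne_zero).clm_apply continuous_const).norm.pow 2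

theorem pd_add_smul {x : E3} (hf : DifferentiableAt ℝ f x) (hg : DifferentiableAt ℝ g x)
    (t : ℝ) (j : Fin 3) : pd (f + t • g) j x = pd f j x + t * pd g j x := by
  simp [pd, fderiv_add hf (hg.const_smul t), fderiv_const_smul hg]

theorem gradSqR_add_smul {x : E3} (hf : DifferentiableAt ℝ f x) (hg : DifferentiableAt ℝ g x)
    (t : ℝ) :
    gradSqR (f + t • g) x = gradSqR f x + 2 * t * gradDot f g x + t ^ 2 * gradSqR g x := by
  simp only [gradSqR, gradDot, pd_add_smul hf hg, mul_sum, ← sum_add_distrib]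
  exact sum_congr rfl fun j _ => by ring

end Derivatives

section FirstVariation

variable {c : ℝ} {a ρ φ : E3 → ℝ}

theorem energyDensity_add_smul (hρ : Differentiable ℝ ρ) (hφ : Differentiable ℝ φ) (t : ℝ)
    (x : E3) :
    energyDensity c a (ρ + t • φ) x = ∑ k ∈ range 5, t ^ k * energyLineCoeff c a ρ φ k x := by
  simp only [energyDensity, gradSqR_add_smul (hρ x) (hφ x), sum_range_succ, sum_range_zero,
    energyLineCoeff, firstVariationDensity, Pi.add_apply, Pi.smul_apply, smul_eq_mul]
  ring

variable {Ω : Set E3}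

theorem integrableOn_energyLineCoeff (hΩ : IsBounded Ω) (hΩm : MeasurableSet Ω)
    (ha : Measurable a) {C : ℝ} (haC : ∀ x ∈ Ω, |a x| ≤ C) (hρ : ContDiff ℝ 1 ρ)
    (hφ : ContDiff ℝ 1 φ) (k : ℕ) : IntegrableOn (energyLineCoeff c a ρ φ k) Ω := by
  have := continuous_gradSqR hρ
  have := continuous_gradSqR hφ
  have := continuous_gradDot hρ hφ
  match k with
  | 0 =>
    exact integrableOn_comp_of_bounded
      (G := fun A x => 1 / 2 * gradSqR ρ x + c * (A - ρ x ^ 2) ^ 2) hΩ hΩm ha haC (by fun_prop)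
  | 1 =>
    exact integrableOn_comp_of_bounded
      (G := fun A x => gradDot ρ φ x - 4 * c * ρ x * φ x * (A - ρ x ^ 2)) hΩ hΩm ha haC
      (by fun_prop)
  | 2 =>
    exact integrableOn_comp_of_bounded
      (G := fun A x => 1 / 2 * gradSqR φ x + c * (6 * ρ x ^ 2 - 2 * A) * φ x ^ 2) hΩ hΩm ha haC
      (by fun_prop)
  | 3 =>
    exact integrableOn_comp_of_bounded (G := fun _ x => 4 * c * ρ x * φ x ^ 3) hΩ hΩm ha haC
      (by fun_prop)
  | 4 =>
    exact integrableOn_comp_of_bounded (G := fun _ x => c * φ x ^ 4) hΩ hΩm ha haC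
      (by fun_prop)
  | _ + 5 => exact integrableOn_zero

theorem hasDerivAt_energy_add_smul (hΩ : IsBounded Ω) (hΩm : MeasurableSet Ω)
    (ha : Measurable a) {C : ℝ} (haC : ∀ x ∈ Ω, |a x| ≤ C) (hρ : ContDiff ℝ 1 ρ)
    (hφ : ContDiff ℝ 1 φ) :
    HasDerivAt (fun t : ℝ => energy c a Ω (ρ + t • φ))
      (∫ x in Ω, firstVariationDensity c a ρ φ x) 0 := by
  simp only [energy, energyDensity_add_smul (hρ.differentiable one_ne_zero)
    (hφ.differentiable one_ne_zero)]
  exact hasDerivAt_integral_sum_pow_mul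
    (fun k _ => integrableOn_energyLineCoeff hΩ hΩm ha haC hρ hφ k) (by norm_num)

theorem integral_firstVariationDensity_eq_zero (hΩ : IsBounded Ω) (hΩm : MeasurableSet Ω)
    (ha : Measurable a) {C : ℝ} (haC : ∀ x ∈ Ω, |a x| ≤ C) (hρ : ContDiff ℝ 1 ρ)
    (hmin : ∀ v : E3 → ℝ, ContDiff ℝ 1 v → energy c a Ω ρ ≤ energy c a Ω v)
    (hφ : ContDiff ℝ 1 φ) : ∫ x in Ω, firstVariationDensity c a ρ φ x = 0 := by
  refine IsLocalMin.hasDerivAt_eq_zero (Filter.Eventually.of_forall fun t => ?_)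
    (hasDerivAt_energy_add_smul hΩ hΩm ha haC hρ hφ)
  simpa using hmin (ρ + t • φ) (hρ.add (hφ.const_smul t))

end FirstVariation

section Decoupling

theorem fderiv_ofReal_mul_apply {E : Type*} [NormedAddCommGroup E] [NormedSpace ℝ E]
    {ρ : E → ℝ} {u : E → ℂ} {x : E} (hρ : DifferentiableAt ℝ ρ x) (hu : DifferentiableAt ℝ u x)
    (v : E) :
    fderiv ℝ (fun y => (ρ y : ℂ) * u y) x v = ρ x • fderiv ℝ u x v + fderiv ℝ ρ x v • u x := by
  have hsmul : (fun y => (ρ y : ℂ) * u y) = fun y => ρ y • u y := by simp only [Complex.real_smul]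
  rw [hsmul, (hρ.hasFDerivAt.fun_smul hu.hasFDerivAt).fderiv]
  rfl

theorem fderiv_mul_norm_sq_sub_one_apply {E F : Type*} [NormedAddCommGroup E] [NormedSpace ℝ E]
    [NormedAddCommGroup F] [InnerProductSpace ℝ F] {ρ : E → ℝ} {u : E → F} {x : E}
    (hρ : DifferentiableAt ℝ ρ x) (hu : DifferentiableAt ℝ u x) (v : E) :
    fderiv ℝ (fun y => ρ y * (‖u y‖ ^ 2 - 1)) x v
      = ρ x * (2 * ⟪u x, fderiv ℝ u x v⟫_ℝ) + (‖u x‖ ^ 2 - 1) * fderiv ℝ ρ x v := by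
  rw [(hρ.hasFDerivAt.fun_mul (hu.hasFDerivAt.norm_sq.sub_const 1)).fderiv]
  simp

variable {ρ : E3 → ℝ} {u : E3 → ℂ} {x : E3}

theorem gradSqC_ofReal_mul (hρ : DifferentiableAt ℝ ρ x) (hu : DifferentiableAt ℝ u x) :
    gradSqC (fun y => (ρ y : ℂ) * u y) x = ρ x ^ 2 * gradSqC u x
      + 2 * ρ x * ∑ j : Fin 3, pd ρ j x * ⟪u x, fderiv ℝ u x (EuclideanSpace.single j 1)⟫_ℝ
      + ‖u x‖ ^ 2 * gradSqR ρ x := by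
  simp only [gradSqC, gradSqR, fderiv_ofReal_mul_apply hρ hu, norm_add_sq_real, norm_smul,
    inner_smul_left, inner_smul_right, mul_sum, ← sum_add_distrib]
  refine sum_congr rfl fun j _ => ?_
  simp only [pd, Real.norm_eq_abs, mul_pow, sq_abs, conj_trivial, real_inner_comm (u x)]
  ring

theorem gradDot_mul_norm_sq_sub_one (hρ : DifferentiableAt ℝ ρ x)
    (hu : DifferentiableAt ℝ u x) :
    gradDot ρ (fun y => ρ y * (‖u y‖ ^ 2 - 1)) x
      = 2 * ρ x * ∑ j : Fin 3, pd ρ j x * ⟪u x, fderiv ℝ u x (EuclideanSpace.single j 1)⟫_ℝ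
        + (‖u x‖ ^ 2 - 1) * gradSqR ρ x := by
  simp only [gradDot, gradSqR, pd, fderiv_mul_norm_sq_sub_one_apply hρ hu, mul_sum,
    ← sum_add_distrib]
  exact sum_congr rfl fun j _ => by ring

theorem energyDensityC_ofReal_mul (c : ℝ) (a : E3 → ℝ) (hρ : DifferentiableAt ℝ ρ x)
    (hu : DifferentiableAt ℝ u x) :
    energyDensityC c a (fun y => (ρ y : ℂ) * u y) x
      = energyDensity c a ρ x
        + (1 / 2 * ρ x ^ 2 * gradSqC u x + c * ρ x ^ 4 * (1 - ‖u x‖ ^ 2) ^ 2)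
        + 1 / 2 * firstVariationDensity c a ρ (fun y => ρ y * (‖u y‖ ^ 2 - 1)) x := by
  rw [energyDensityC, gradSqC_ofReal_mul hρ hu, firstVariationDensity,
    gradDot_mul_norm_sq_sub_one hρ hu, norm_mul, Complex.norm_real, Real.norm_eq_abs, mul_pow,
    sq_abs, energyDensity]
  ring

variable {c : ℝ} {a : E3 → ℝ} {Ω : Set E3}

theorem integral_energyDensityC_ofReal_mul (hΩ : IsBounded Ω) (hΩm : MeasurableSet Ω)
    (ha : Measurable a) {C : ℝ} (haC : ∀ x ∈ Ω, |a x| ≤ C) (hρ : ContDiff ℝ 1 ρ)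
    (hmin : ∀ v : E3 → ℝ, ContDiff ℝ 1 v → energy c a Ω ρ ≤ energy c a Ω v)
    {u : E3 → ℂ} (hu : ContDiff ℝ 1 u) :
    ∫ x in Ω, energyDensityC c a (fun y => (ρ y : ℂ) * u y) x = energy c a Ω ρ
      + ∫ x in Ω, (1 / 2 * ρ x ^ 2 * gradSqC u x + c * ρ x ^ 4 * (1 - ‖u x‖ ^ 2) ^ 2) := by
  set φ : E3 → ℝ := fun y => ρ y * (‖u y‖ ^ 2 - 1)
  set H : E3 → ℝ := fun x => 1 / 2 * ρ x ^ 2 * gradSqC u x + c * ρ x ^ 4 * (1 - ‖u x‖ ^ 2) ^ 2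
  have hφ : ContDiff ℝ 1 φ := hρ.mul ((hu.norm_sq ℝ).sub contDiff_const)
  have hE : IntegrableOn (energyDensity c a ρ) Ω :=
    integrableOn_energyLineCoeff hΩ hΩm ha haC hρ hφ 0
  have hFV : IntegrableOn (firstVariationDensity c a ρ φ) Ω :=
    integrableOn_energyLineCoeff hΩ hΩm ha haC hρ hφ 1
  have := continuous_gradSqC hu
  have hH : IntegrableOn H Ω := ((by fun_prop : Continuous H).continuousOn.integrableOn_compact
    hΩ.isCompact_closure).mono_set subset_closure
  simp only [energyDensityC_ofReal_mul c a (hρ.differentiable one_ne_zero _)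
    (hu.differentiable one_ne_zero _)]
  rw [integral_add (hE.fun_add hH) (hFV.const_mul _), integral_add hE hH, integral_const_mul,
    integral_firstVariationDensity_eq_zero hΩ hΩm ha haC hρ hmin hφ, mul_zero, add_zero, energy]

end Decoupling

theorem stmt_1_general
    (Ω : Set E3) (hΩbdd : Bornology.IsBounded Ω) (hΩmeas : MeasurableSet Ω)
    (b ε : ℝ)
    (a : E3 → ℝ) (ha_meas : Measurable a) (ha : ∀ x ∈ Ω, b ≤ a x ∧ a x ≤ 1)
    (ρ : E3 → ℝ) (hρreg : ContDiff ℝ 2 ρ)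
    -- ρ is a minimizer of E_ε :
    (hmin : ∀ v : E3 → ℝ, ContDiff ℝ 1 v →
      (∫ x in Ω, (((1:ℝ)/2) * gradSqR ρ x + (1/(2*ε^2)) * (a x - ρ x ^ 2) ^ 2)) ≤
      ∫ x in Ω, (((1:ℝ)/2) * gradSqR v x + (1/(2*ε^2)) * (a x - v x ^ 2) ^ 2))
    (u : E3 → ℂ) (hu : ContDiff ℝ 1 u) :
    (∫ x in Ω, (((1:ℝ)/2) * gradSqC (fun y => (ρ y : ℂ) * u y) x
        + (1/(2*ε^2)) * (a x - ‖(ρ x : ℂ) * u x‖ ^ 2) ^ 2))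
      = (∫ x in Ω, (((1:ℝ)/2) * gradSqR ρ x + (1/(2*ε^2)) * (a x - ρ x ^ 2) ^ 2))
        + ∫ x in Ω, (((1:ℝ)/2) * ρ x ^ 2 * gradSqC u x
            + (ρ x ^ 4 / (2*ε^2)) * (1 - ‖u x‖ ^ 2) ^ 2) := by
  have haC : ∀ x ∈ Ω, |a x| ≤ max |b| 1 := fun x hx => abs_le.mpr
    ⟨by linarith [neg_abs_le b, le_max_left |b| 1, (ha x hx).1],
      by linarith [le_max_right |b| 1, (ha x hx).2]⟩
  refine (integral_energyDensityC_ofReal_mul hΩbdd hΩmeas ha_meas haC (hρreg.of_le one_le_two)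
    hmin hu).trans (congrArg _ (integral_congr_ae (ae_of_all _ fun x => ?_)))
  ring

/-- the Lassoued–Mironescu decoupling
`E_ε(ρu) = E_ε(ρ) + (1/2)∫_Ω ρ²|∇u|² + (ρ⁴/(2ε²))(1 - |u|²)²`,
where `ρ` is a positive minimizer of `E_ε`, solving the Euler–Lagrange equation
`-Δρ = ρ(a-ρ²)/ε²` with homogeneous Neumann boundary condition. -/
theorem stmt_1
    (Ω : Set E3) (hΩopen : IsOpen Ω) (hΩbdd : Bornology.IsBounded Ω) (hΩmeas : MeasurableSet Ω)
    (b ε : ℝ) (hb0 : 0 < b) (hb1 : b < 1) (hε : 0 < ε)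
    (a : E3 → ℝ) (ha_meas : Measurable a) (ha : ∀ x ∈ Ω, b ≤ a x ∧ a x ≤ 1)
    (ρ : E3 → ℝ) (hρreg : ContDiff ℝ 2 ρ) (hρpos : ∀ x ∈ closure Ω, 0 < ρ x)
    -- ρ is a minimizer of E_ε :
    (hmin : ∀ v : E3 → ℝ, ContDiff ℝ 1 v →
      (∫ x in Ω, (((1:ℝ)/2) * gradSqR ρ x + (1/(2*ε^2)) * (a x - ρ x ^ 2) ^ 2)) ≤
      ∫ x in Ω, (((1:ℝ)/2) * gradSqR v x + (1/(2*ε^2)) * (a x - v x ^ 2) ^ 2))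
    -- and hence solves the Euler–Lagrange equation with Neumann boundary condition :
    (hPDE : ∀ x ∈ Ω, -lap ρ x = ρ x * (a x - ρ x ^ 2) / ε ^ 2)
    (ν : E3 → E3) (hNeu : ∀ x ∈ frontier Ω, fderiv ℝ ρ x (ν x) = 0)
    (u : E3 → ℂ) (hu : ContDiff ℝ 1 u) :
    (∫ x in Ω, (((1:ℝ)/2) * gradSqC (fun y => (ρ y : ℂ) * u y) x
        + (1/(2*ε^2)) * (a x - ‖(ρ x : ℂ) * u x‖ ^ 2) ^ 2))
      = (∫ x in Ω, (((1:ℝ)/2) * gradSqR ρ x + (1/(2*ε^2)) * (a x - ρ x ^ 2) ^ 2))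
        + ∫ x in Ω, (((1:ℝ)/2) * ρ x ^ 2 * gradSqC u x
            + (ρ x ^ 4 / (2*ε^2)) * (1 - ‖u x‖ ^ 2) ^ 2) :=
  stmt_1_general Ω hΩbdd hΩmeas b ε a ha_meas ha ρ hρreg hmin u hu
end
end

section
/- Let J(A) = (1/2)∫_Ω ρ² |A - T(A)|² + (1/2)∫_{ℝ³} |curl(A - A₀)|² on the affine space A₀ + V, where V is a Hilbert space on which A ↦ ‖curl A‖_{L²(ℝ³)} is an equivalent norm, ρ satisfies 0 < b ≤ ρ² ≤ 1, and T : L²(Ω,ℝ³) → L²(Ω,ℝ³) is a bounded linear operator with ∫_Ω ρ²|T(A)|² ≤ ∫_Ω ρ² A · T(A) for all A. Then J admits a unique minimizer on A₀ + V. -/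
open scoped RealInnerProductSpace

noncomputable section

set_option maxHeartbeats 1000000 in
/-- abstract form of the existence and uniqueness of the minimizer of
`J(A) = (1/2)∫_Ω ρ²|A - T(A)|² + (1/2)∫_{ℝ³}|curl(A - A₀)|²` on the affine space `A₀ + V`.
Here `H` plays the role of `L²(Ω,ℝ³)`, `W` is multiplication by `ρ²` (a bounded operator with
`b‖u‖² ≤ ⟪Wu,u⟫ ≤ ‖u‖²`, encoding `b ≤ ρ² ≤ 1`), `T` is the bounded linear operator with
`⟪W(TA),TA⟫ ≤ ⟪WA,TA⟫` (i.e. `∫ρ²|TA|² ≤ ∫ρ² A·TA`), `ι : V → H` is the restriction of a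
field to `Ω`, and `K : V → H₂` is the curl, making `v ↦ ‖Kv‖` an equivalent norm on the
Hilbert space `V`.  Then `J` admits a unique minimizer. -/
theorem stmt_17
    {H V H₂ : Type*}
    [NormedAddCommGroup H] [InnerProductSpace ℝ H] [CompleteSpace H]
    [NormedAddCommGroup V] [InnerProductSpace ℝ V] [CompleteSpace V]
    [NormedAddCommGroup H₂] [InnerProductSpace ℝ H₂]
    (b : ℝ) (hb : 0 < b)
    (W : H →L[ℝ] H)
    (hWlow : ∀ u : H, b * ‖u‖ ^ 2 ≤ ⟪W u, u⟫) (hWhigh : ∀ u : H, ⟪W u, u⟫ ≤ ‖u‖ ^ 2)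
    (T : H →L[ℝ] H) (hT : ∀ u : H, ⟪W (T u), T u⟫ ≤ ⟪W u, T u⟫)
    (ι : V →L[ℝ] H)
    (K : V →L[ℝ] H₂) (m : ℝ) (hm : 0 < m) (hK : ∀ v : V, m * ‖v‖ ≤ ‖K v‖)
    (a₀ : H) :
    ∃! v : V, ∀ w : V,
      ((1:ℝ)/2) * ⟪W ((a₀ + ι v) - T (a₀ + ι v)), (a₀ + ι v) - T (a₀ + ι v)⟫
          + ((1:ℝ)/2) * ‖K v‖ ^ 2
        ≤ ((1:ℝ)/2) * ⟪W ((a₀ + ι w) - T (a₀ + ι w)), (a₀ + ι w) - T (a₀ + ι w)⟫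
          + ((1:ℝ)/2) * ‖K w‖ ^ 2 := by
  classical
  -- affine decomposition: (a₀ + ι v) - T (a₀ + ι v) = c + L v
  set c : H := a₀ - T a₀ with hc
  set L : V →L[ℝ] H := (ContinuousLinearMap.id ℝ H - T).comp ι with hLdef
  have hL : ∀ v : V, L v = ι v - T (ι v) := fun v => rfl
  have hS : ∀ v : V, (a₀ + ι v) - T (a₀ + ι v) = c + L v := by
    intro v
    rw [hL, hc, map_add]
    abel
  -- bounded bilinear forms
  set BW : H →L[ℝ] H →L[ℝ] ℝ := (innerSL ℝ).comp W with hBW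
  set B1 : V →L[ℝ] V →L[ℝ] ℝ := BW.bilinearComp L L with hB1
  set BK : V →L[ℝ] V →L[ℝ] ℝ := (innerSL ℝ).bilinearComp K K with hBK
  set B : V →L[ℝ] V →L[ℝ] ℝ := ((1:ℝ)/2) • (B1 + B1.flip) + BK with hBdef
  have hB : ∀ v w : V, B v w
      = ((1:ℝ)/2) * (⟪W (L v), L w⟫ + ⟪W (L w), L v⟫) + ⟪K v, K w⟫ := by
    intro v w
    simp [hBdef, hB1, hBK, hBW, mul_add]
  -- linear part
  set ℓ : V →L[ℝ] ℝ :=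
    ((1:ℝ)/2) • ((innerSL ℝ (W c)).comp L + (BW.flip c).comp L) with hldef
  have hℓ : ∀ w : V, ℓ w = ((1:ℝ)/2) * (⟪W c, L w⟫ + ⟪W (L w), c⟫) := by
    intro w
    simp [hldef, hBW, mul_add]
  -- the functional
  set F : V → ℝ := fun w => ((1:ℝ)/2) * B w w + ℓ w + ((1:ℝ)/2) * ⟪W c, c⟫ with hF
  have hexp : ∀ v : V,
      ((1:ℝ)/2) * ⟪W ((a₀ + ι v) - T (a₀ + ι v)), (a₀ + ι v) - T (a₀ + ι v)⟫
        + ((1:ℝ)/2) * ‖K v‖ ^ 2 = F v := by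
    intro v
    rw [hS v]
    have hn : ‖K v‖ ^ 2 = ⟪K v, K v⟫ := (real_inner_self_eq_norm_sq (K v)).symm
    rw [hn, hF]
    simp only [hB, hℓ, map_add, inner_add_left, inner_add_right]
    ring
  -- symmetry and positivity of B
  have hBsymm : ∀ v w : V, B v w = B w v := by
    intro v w
    rw [hB, hB, real_inner_comm (K v) (K w)]
    ring
  have hBpos : ∀ d : V, m * m * ‖d‖ * ‖d‖ ≤ B d d := by
    intro d
    rw [hB]
    have h1 : (0:ℝ) ≤ ⟪W (L d), L d⟫ :=
      le_trans (by positivity) (hWlow (L d))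
    have h2 : m * ‖d‖ ≤ ‖K d‖ := hK d
    have h3 : ⟪K d, K d⟫ = ‖K d‖ ^ 2 := real_inner_self_eq_norm_sq (K d)
    have h4 : (0:ℝ) ≤ m * ‖d‖ := by positivity
    have h5 : (0:ℝ) ≤ ‖d‖ := norm_nonneg d
    generalize hx : (⟪W (L d), L d⟫ : ℝ) = x at h1 ⊢
    rw [h3]
    nlinarith
  have coercive : IsCoercive B := ⟨m * m, by positivity, hBpos⟩
  -- Lax–Milgram: solve B v₀ w = -ℓ w for all w
  set f : V := (InnerProductSpace.toDual ℝ V).symm (-ℓ) with hf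
  set v₀ : V := coercive.continuousLinearEquivOfBilin.symm f with hv₀
  have hsolve : ∀ w : V, B v₀ w = -(ℓ w) := by
    intro w
    have h1 : ⟪coercive.continuousLinearEquivOfBilin v₀, w⟫ = B v₀ w :=
      coercive.continuousLinearEquivOfBilin_apply v₀ w
    have h2 : coercive.continuousLinearEquivOfBilin v₀ = f := by
      rw [hv₀]; exact coercive.continuousLinearEquivOfBilin.apply_symm_apply f
    rw [h2] at h1
    rw [← h1, hf, InnerProductSpace.toDual_symm_apply]
    simp
  -- quadratic expansion around v₀
  have hquad : ∀ w : V, F w = F v₀ + ((1:ℝ)/2) * B (w - v₀) (w - v₀) := by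
    intro w
    have hw : w = v₀ + (w - v₀) := by abel
    set d : V := w - v₀ with hd
    have hBexp : B w w = B v₀ v₀ + 2 * B v₀ d + B d d := by
      rw [hw]
      simp only [map_add, ContinuousLinearMap.add_apply]
      rw [hBsymm d v₀]
      ring
    have hℓexp : ℓ w = ℓ v₀ + ℓ d := by rw [hw, map_add]
    rw [hF]
    simp only [hBexp, hℓexp, hsolve d]
    ring
  -- existence and uniqueness
  clear_value v₀ f B BW B1 BK ℓ F L c
  refine ⟨v₀, ?_, ?_⟩
  · intro w
    rw [hexp v₀, hexp w, hquad w]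
    have h1 := hBpos (w - v₀)
    have h2 : (0:ℝ) ≤ m * m * ‖w - v₀‖ * ‖w - v₀‖ := by positivity
    linarith
  · intro v' hv'
    have h1 : F v' ≤ F v₀ := by
      have := hv' v₀
      rwa [hexp v', hexp v₀] at this
    have h2 : F v' = F v₀ + ((1:ℝ)/2) * B (v' - v₀) (v' - v₀) := hquad v'
    have h3 := hBpos (v' - v₀)
    have h4 : ‖v' - v₀‖ = 0 := by
      have hm2 : (0:ℝ) < m * m := mul_pos hm hm
      set y : ℝ := B (v' - v₀) (v' - v₀) with hy
      set t : ℝ := ‖v' - v₀‖ with ht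
      have hyle : y ≤ 0 := by linarith
      have h7 : m * m * (t * t) ≤ m * m * 0 := by linarith
      have h8 : t * t ≤ 0 := le_of_mul_le_mul_left h7 hm2
      have h9 : t * t = 0 := le_antisymm h8 (mul_self_nonneg t)
      exact mul_self_eq_zero.mp h9
    have h6 : v' - v₀ = 0 := norm_eq_zero.mp h4
    exact sub_eq_zero.mp h6
end
end
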